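/- arXiv:2601.19549 — 4 statements merged into one kernel-verified Lean document; each statement's English description precedes it below -/
import Mathlib

section
/- With the Gauss-sequence model of a knotoid diagram D with n crossings and base point a: define the mirror diagram D* by swapping the roles of over- and under-passages, i.e., o*(c) = u(c) and u*(c) = o(c). Then for every base point a, d((D*)_a) = d((−D)_{2n−a}), and consequently d(D*) = d(−D), where d(E) denotes the minimum of d(E_b) over all base points b. -/
/-- The label of position `p` relative to base point `a`, i.e. the order in which position `p`
is encountered when traversing the `2*n` positions cyclically starting at base point `a`. -/
def relLabel (n : ℕ) (a : Fin (2 * n + 1)) (p : Fin (2 * n)) : ℕ :=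
  (p.val + 2 * n - a.val) % (2 * n)

/-- The warping degree of the diagram with Gauss sequence `o, u` at base point `a`. -/
def warpingDegree (n : ℕ) (o u : Fin n → Fin (2 * n)) (a : Fin (2 * n + 1)) : ℕ :=
  (Finset.univ.filter fun c => relLabel n a (u c) < relLabel n a (o c)).card

/-- The position `p ↦ 2n - 1 - p` of the reversed diagram. -/
def revPos (n : ℕ) (p : Fin (2 * n)) : Fin (2 * n) :=
  ⟨2 * n - 1 - p.val, by have := p.isLt; omega⟩

/-- The base point of the reversed diagram corresponding to base point `a`. -/
def revBase (n : ℕ) (a : Fin (2 * n + 1)) : Fin (2 * n + 1) :=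
  ⟨2 * n - a.val, by have := a.isLt; omega⟩

/-- The cutting number of crossing `c` at base point `a`: `2α − β − γ` where `α` is the
relabeled position of the over-passage, `β` that of the under-passage and `γ = β + 1`. -/
def cutNum (n : ℕ) (o u : Fin n → Fin (2 * n)) (a : Fin (2 * n + 1)) (c : Fin n) : ℤ :=
  2 * (relLabel n a (o c) : ℤ) - (relLabel n a (u c) : ℤ) - ((relLabel n a (u c) : ℤ) + 1)

/-- The diagram is alternating: along consecutive positions, over-passages and
under-passages strictly alternate. -/
def IsAlternating (n : ℕ) (o u : Fin n → Fin (2 * n)) : Prop :=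
  ∀ p q : Fin (2 * n), p.val + 1 = q.val → ((∃ c, o c = p) ↔ (∃ c, u c = q))


lemma relLabel_rev_key (n : ℕ) (a : Fin (2 * n + 1)) (p : Fin (2 * n)) :
    relLabel n a p + relLabel n (revBase n a) (revPos n p) = 2 * n - 1 := by
  obtain ⟨x, hx⟩ := p; obtain ⟨A, hA⟩ := a
  simp only [relLabel, revBase, revPos]
  rcases le_or_gt A x with h | h
  · have e1 : x + 2 * n - A = (x - A) + 2 * n := by omega
    have e2 : 2 * n - 1 - x + 2 * n - (2 * n - A) = 2 * n - 1 - x + A := by omega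
    rw [e1, Nat.add_mod_right, Nat.mod_eq_of_lt (by omega), e2,
      Nat.mod_eq_of_lt (by omega)]
    omega
  · have e2 : 2 * n - 1 - x + 2 * n - (2 * n - A) = (A - 1 - x) + 2 * n := by omega
    rw [Nat.mod_eq_of_lt (by omega), e2, Nat.add_mod_right,
      Nat.mod_eq_of_lt (by omega)]
    omega

lemma revBase_revBase (n : ℕ) (a : Fin (2 * n + 1)) : revBase n (revBase n a) = a := by
  obtain ⟨A, hA⟩ := a
  simp only [revBase, Fin.mk.injEq]
  omega

/-- Corollary 4.2: the mirror diagram `D*` (with over/under passages exchanged) satisfies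
`d((D*)_a) = d((−D)_{2n−a})` for every base point, and hence `d(D*) = d(−D)`. -/
theorem warpingDegree_mirror_eq_rev (n : ℕ) (o u : Fin n → Fin (2 * n))
    (hval : Function.Injective (Sum.elim o u : Fin n ⊕ Fin n → Fin (2 * n))) :
    (∀ a : Fin (2 * n + 1),
      warpingDegree n u o a =
        warpingDegree n (fun c => revPos n (o c)) (fun c => revPos n (u c)) (revBase n a)) ∧
    Finset.univ.inf' Finset.univ_nonempty (fun a => warpingDegree n u o a) =
      Finset.univ.inf' Finset.univ_nonempty
        (fun a => warpingDegree n (fun c => revPos n (o c)) (fun c => revPos n (u c)) a) := by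
  have key : ∀ a : Fin (2 * n + 1),
      warpingDegree n u o a =
        warpingDegree n (fun c => revPos n (o c)) (fun c => revPos n (u c)) (revBase n a) := by
    intro a
    unfold warpingDegree
    congr 1
    apply Finset.filter_congr
    intro c _
    show relLabel n a (o c) < relLabel n a (u c) ↔
      relLabel n (revBase n a) (revPos n (u c)) < relLabel n (revBase n a) (revPos n (o c))
    have h1 := relLabel_rev_key n a (o c)
    have h2 := relLabel_rev_key n a (u c)
    constructor <;> intro hlt <;> omega
  refine ⟨key, le_antisymm ?_ ?_⟩
  · apply Finset.le_inf'
    intro b _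
    calc Finset.univ.inf' Finset.univ_nonempty (fun a => warpingDegree n u o a)
        ≤ warpingDegree n u o (revBase n b) := Finset.inf'_le _ (Finset.mem_univ _)
      _ = _ := by rw [key (revBase n b), revBase_revBase]
  · apply Finset.le_inf'
    intro b _
    calc Finset.univ.inf' Finset.univ_nonempty
          (fun a => warpingDegree n (fun c => revPos n (o c)) (fun c => revPos n (u c)) a)
        ≤ warpingDegree n (fun c => revPos n (o c)) (fun c => revPos n (u c)) (revBase n b) :=
          Finset.inf'_le _ (Finset.mem_univ _)
      _ = warpingDegree n u o b := (key b).symm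
end

section
/- With the Gauss-sequence model of a knotoid diagram D with n crossings: suppose base points a₁ and a₂ in Fin (2n+1) are such that the cyclic path from a₁ to a₂ (in the direction of the orientation) crosses exactly one passage position, and that position is the over-passage o(c₀) of some crossing c₀. Then d(D_{a₂}) = d(D_{a₁}) + 1. Dually, if the unique passage position between a₁ and a₂ is an under-passage u(c₀), then d(D_{a₂}) = d(D_{a₁}) − 1. -/
/-- Lemma 4.3: moving the base point forward past a single passage position
(position `a₁`, lying between base points `a₁` and `a₂ = a₁ + 1`) raises the warping degree
by 1 if that position is an over-passage, and lowers it by 1 if it is an under-passage. -/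
theorem warpingDegree_step (n : ℕ) (o u : Fin n → Fin (2 * n))
    (hval : Function.Injective (Sum.elim o u : Fin n ⊕ Fin n → Fin (2 * n)))
    (a₁ a₂ : Fin (2 * n + 1)) (hstep : a₁.val + 1 = a₂.val) (c₀ : Fin n) :
    ((o c₀).val = a₁.val →
      warpingDegree n o u a₂ = warpingDegree n o u a₁ + 1) ∧
    ((u c₀).val = a₁.val →
      warpingDegree n o u a₂ + 1 = warpingDegree n o u a₁) := by
  have L : ∀ (a : Fin (2*n+1)) (p : Fin (2*n)),
      relLabel n a p = if p.val < a.val then p.val + 2*n - a.val else p.val - a.val := by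
    intro a p
    have ha := a.isLt
    have hp := p.isLt
    unfold relLabel
    split
    · rw [Nat.mod_eq_of_lt]; omega
    · have h1 : p.val + 2*n - a.val = (p.val - a.val) + 2*n := by omega
      rw [h1, Nat.add_mod_right, Nat.mod_eq_of_lt]; omega
  have ha2 := a₂.isLt
  have ha1lt : a₁.val < 2*n := by omega
  constructor
  · intro h
    have hne : ∀ c, (u c).val ≠ a₁.val := by
      intro c hc
      have : Sum.elim o u (.inr c) = Sum.elim o u (.inl c₀) :=
        Fin.ext (by simpa using hc.trans h.symm)
      simpa using hval this
    have hno : ∀ c, c ≠ c₀ → (o c).val ≠ a₁.val := by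
      intro c hc hc2
      have : Sum.elim o u (.inl c) = Sum.elim o u (.inl c₀) :=
        Fin.ext (by simpa using hc2.trans h.symm)
      exact hc (by simpa using hval this)
    unfold warpingDegree
    have hset : (Finset.univ.filter fun c => relLabel n a₂ (u c) < relLabel n a₂ (o c))
        = insert c₀ (Finset.univ.filter fun c => relLabel n a₁ (u c) < relLabel n a₁ (o c)) := by
      ext c
      simp only [Finset.mem_filter, Finset.mem_insert, Finset.mem_univ, true_and, L]
      have huc := (u c).isLt
      have hoc := (o c).isLt
      have huc0 := hne c
      by_cases hc : c = c₀
      · subst hc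
        constructor
        · intro _; exact Or.inl rfl
        · intro _; split_ifs <;> omega
      · have hoc0 := hno c hc
        simp only [hc, false_or]
        split_ifs <;> omega
    rw [hset, Finset.card_insert_of_notMem]
    simp only [Finset.mem_filter, Finset.mem_univ, true_and, L, not_lt]
    have huc := (u c₀).isLt
    split_ifs <;> omega
  · intro h
    have hne : ∀ c, (o c).val ≠ a₁.val := by
      intro c hc
      have : Sum.elim o u (.inl c) = Sum.elim o u (.inr c₀) :=
        Fin.ext (by simpa using hc.trans h.symm)
      simpa using hval this
    have hno : ∀ c, c ≠ c₀ → (u c).val ≠ a₁.val := by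
      intro c hc hc2
      have : Sum.elim o u (.inr c) = Sum.elim o u (.inr c₀) :=
        Fin.ext (by simpa using hc2.trans h.symm)
      exact hc (by simpa using hval this)
    unfold warpingDegree
    have hset : (Finset.univ.filter fun c => relLabel n a₁ (u c) < relLabel n a₁ (o c))
        = insert c₀ (Finset.univ.filter fun c => relLabel n a₂ (u c) < relLabel n a₂ (o c)) := by
      ext c
      simp only [Finset.mem_filter, Finset.mem_insert, Finset.mem_univ, true_and, L]
      have huc := (u c).isLt
      have hoc := (o c).isLt
      have hoc0 := hne c
      by_cases hc : c = c₀
      · subst hc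
        constructor
        · intro _; exact Or.inl rfl
        · intro _; split_ifs <;> omega
      · have huc0 := hno c hc
        simp only [hc, false_or]
        split_ifs <;> omega
    rw [hset, Finset.card_insert_of_notMem]
    simp only [Finset.mem_filter, Finset.mem_univ, true_and, L, not_lt]
    have hoc := (o c₀).isLt
    split_ifs <;> omega
end

section
/- With the Gauss-sequence model of a knotoid diagram D with n ≥ 1 crossings: as the base point a ranges over all 2n+1 base points, the function a ↦ d(D_a) changes by exactly ±1 when a moves past a single passage position, takes every integer value between its minimum d(D) = min_a d(D_a) and its maximum max_a d(D_a), and if a' is a base point minimizing d((−D)_{a'}) over base points of −D, then the corresponding base point a' of D maximizes d(D_{a'}). -/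
lemma relLabel_eq (n : ℕ) (a : Fin (2 * n + 1)) (p : Fin (2 * n)) :
    relLabel n a p = if a.val ≤ p.val then p.val - a.val else p.val + 2 * n - a.val := by
  unfold relLabel
  have hp := p.isLt
  have ha := a.isLt
  split
  · have h' : p.val + 2 * n - a.val = (p.val - a.val) + 2 * n := by omega
    rw [h', Nat.add_mod_right, Nat.mod_eq_of_lt (by omega)]
  · rw [Nat.mod_eq_of_lt (by omega)]

lemma relLabel_lt (n : ℕ) (a : Fin (2 * n + 1)) (p : Fin (2 * n)) :
    relLabel n a p < 2 * n := by
  rw [relLabel_eq]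
  have hp := p.isLt
  have ha := a.isLt
  split <;> omega

lemma relLabel_inj (n : ℕ) (a : Fin (2 * n + 1)) {p q : Fin (2 * n)}
    (h : relLabel n a p = relLabel n a q) : p = q := by
  rw [relLabel_eq, relLabel_eq] at h
  have hp := p.isLt
  have hq := q.isLt
  have ha := a.isLt
  apply Fin.ext
  split_ifs at h <;> omega

lemma step_lemma (n : ℕ) (hn : 1 ≤ n) (o u : Fin n → Fin (2 * n))
    (hval : Function.Injective (Sum.elim o u : Fin n ⊕ Fin n → Fin (2 * n)))
    (a₁ a₂ : Fin (2 * n + 1)) (h : a₁.val + 1 = a₂.val) :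
    warpingDegree n o u a₂ = warpingDegree n o u a₁ + 1 ∨
      warpingDegree n o u a₁ = warpingDegree n o u a₂ + 1 := by
  have ha2 := a₂.isLt
  set p0 : Fin (2 * n) := ⟨a₁.val, by omega⟩ with hp0def
  have hL0 : relLabel n a₁ p0 = 0 := by
    rw [relLabel_eq]; simp [hp0def]
  have hL2 : relLabel n a₂ p0 = 2 * n - 1 := by
    rw [relLabel_eq]
    split_ifs <;> simp_all <;> omega
  have hshift : ∀ p : Fin (2 * n), p ≠ p0 → relLabel n a₂ p + 1 = relLabel n a₁ p := by
    intro p hp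
    have hne : p.val ≠ a₁.val := fun h' => hp (Fin.ext h')
    have hpl := p.isLt
    rw [relLabel_eq, relLabel_eq]
    split_ifs <;> omega
  -- surjectivity of Sum.elim o u
  have hsurj : Function.Surjective (Sum.elim o u : Fin n ⊕ Fin n → Fin (2 * n)) := by
    have e : (Fin n ⊕ Fin n) ≃ Fin (2 * n) := finSumFinEquiv.trans (finCongr (by ring))
    exact (Finite.injective_iff_surjective_of_equiv e).mp hval
  obtain ⟨s, hs⟩ := hsurj p0
  have houu : ∀ c d : Fin n, o c ≠ u d := by
    intro c d hcd
    have := hval (a₁ := Sum.inl c) (a₂ := Sum.inr d) (by simpa using hcd)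
    simp at this
  rcases s with c0 | c0
  · -- o c0 = p0 : degree increases
    left
    simp only [Sum.elim_inl] at hs
    have ho_inj : Function.Injective o := fun x y hxy => by
      have := hval (a₁ := Sum.inl x) (a₂ := Sum.inl y) (by simpa using hxy)
      simpa using this
    have hkey : (Finset.univ.filter fun c => relLabel n a₂ (u c) < relLabel n a₂ (o c)) =
        insert c0 (Finset.univ.filter fun c => relLabel n a₁ (u c) < relLabel n a₁ (o c)) := by
      ext c
      simp only [Finset.mem_insert, Finset.mem_filter, Finset.mem_univ, true_and]
      by_cases hc : c = c0
      · subst hc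
        simp only [true_or, iff_true]
        rw [hs, hL2]
        have hu : u c ≠ p0 := by rw [← hs]; exact fun h' => houu c c h'.symm
        have := hshift (u c) hu
        have := relLabel_lt n a₁ (u c)
        omega
      · have ho : o c ≠ p0 := by rw [← hs]; exact fun h' => hc (ho_inj h')
        have hu : u c ≠ p0 := by rw [← hs]; exact fun h' => houu c0 c h'.symm
        have h1 := hshift (o c) ho
        have h2 := hshift (u c) hu
        constructor
        · intro h'; right; omega
        · rintro (h' | h')
          · exact absurd h' hc
          · omega
    unfold warpingDegree
    rw [hkey, Finset.card_insert_of_notMem]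
    simp only [Finset.mem_filter, Finset.mem_univ, true_and, not_lt]
    rw [hs, hL0]
    exact Nat.zero_le _
  · -- u c0 = p0 : degree decreases
    right
    simp only [Sum.elim_inr] at hs
    have hu_inj : Function.Injective u := fun x y hxy => by
      have := hval (a₁ := Sum.inr x) (a₂ := Sum.inr y) (by simpa using hxy)
      simpa using this
    have hkey : (Finset.univ.filter fun c => relLabel n a₁ (u c) < relLabel n a₁ (o c)) =
        insert c0 (Finset.univ.filter fun c => relLabel n a₂ (u c) < relLabel n a₂ (o c)) := by
      ext c
      simp only [Finset.mem_insert, Finset.mem_filter, Finset.mem_univ, true_and]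
      by_cases hc : c = c0
      · subst hc
        simp only [true_or, iff_true]
        rw [hs, hL0]
        have ho : o c ≠ p0 := by rw [← hs]; exact houu c c
        have h0 : relLabel n a₁ (o c) ≠ 0 := by
          rw [← hL0]
          exact fun h' => ho (relLabel_inj n a₁ h')
        omega
      · have ho : o c ≠ p0 := by rw [← hs]; exact houu c c0
        have hu : u c ≠ p0 := by rw [← hs]; exact fun h' => hc (hu_inj h')
        have h1 := hshift (o c) ho
        have h2 := hshift (u c) hu
        constructor
        · intro h'; right; omega
        · rintro (h' | h')
          · exact absurd h' hc
          · omega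
    unfold warpingDegree
    rw [hkey, Finset.card_insert_of_notMem]
    simp only [Finset.mem_filter, Finset.mem_univ, true_and, not_lt]
    rw [hs, hL2]
    have ho : o c0 ≠ p0 := by rw [← hs]; exact houu c0 c0
    have := hshift (o c0) ho
    have := relLabel_lt n a₁ (o c0)
    omega

lemma rev_relLabel (n : ℕ) (a : Fin (2 * n + 1)) (p : Fin (2 * n)) :
    relLabel n (revBase n a) (revPos n p) = 2 * n - 1 - relLabel n a p := by
  rw [relLabel_eq, relLabel_eq]
  unfold revBase revPos
  simp only []
  have hp := p.isLt
  have ha := a.isLt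
  split_ifs <;> omega

lemma complement_lemma (n : ℕ) (o u : Fin n → Fin (2 * n))
    (hval : Function.Injective (Sum.elim o u : Fin n ⊕ Fin n → Fin (2 * n)))
    (a : Fin (2 * n + 1)) :
    warpingDegree n (fun c => revPos n (o c)) (fun c => revPos n (u c)) (revBase n a) +
      warpingDegree n o u a = n := by
  have hne : ∀ c : Fin n, relLabel n a (u c) ≠ relLabel n a (o c) := by
    intro c h'
    have huo : u c = o c := relLabel_inj n a h'
    have := hval (a₁ := Sum.inr c) (a₂ := Sum.inl c) (by simpa using huo)
    simp at this
  unfold warpingDegree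
  have hiff : ∀ c : Fin n,
      (relLabel n (revBase n a) (revPos n (u c)) < relLabel n (revBase n a) (revPos n (o c))) ↔
        ¬ (relLabel n a (u c) < relLabel n a (o c)) := by
    intro c
    rw [rev_relLabel, rev_relLabel]
    have h1 := relLabel_lt n a (u c)
    have h2 := relLabel_lt n a (o c)
    have := hne c
    omega
  simp only [hiff]
  rw [add_comm, Finset.card_filter_add_card_filter_not]
  simp

lemma ivt_up (f : ℕ → ℕ) (h : ∀ i, f (i + 1) ≤ f i + 1) (k : ℕ) :
    ∀ j i, i ≤ j → f i ≤ k → k ≤ f j → ∃ t, t ≤ j ∧ f t = k := by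
  intro j
  induction j with
  | zero =>
    intro i hi h1 h2
    obtain rfl : i = 0 := by omega
    exact ⟨0, le_refl _, by omega⟩
  | succ j ih =>
    intro i hi h1 h2
    by_cases hk : k ≤ f j
    · by_cases hij : i ≤ j
      · obtain ⟨t, ht, hft⟩ := ih i hij h1 hk
        exact ⟨t, by omega, hft⟩
      · obtain rfl : i = j + 1 := by omega
        exact ⟨j + 1, le_refl _, by omega⟩
    · have := h j
      exact ⟨j + 1, le_refl _, by omega⟩

lemma ivt_down (f : ℕ → ℕ) (h : ∀ i, f i ≤ f (i + 1) + 1) (k : ℕ) :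
    ∀ j i, i ≤ j → k ≤ f i → f j ≤ k → ∃ t, t ≤ j ∧ f t = k := by
  intro j
  induction j with
  | zero =>
    intro i hi h1 h2
    obtain rfl : i = 0 := by omega
    exact ⟨0, le_refl _, by omega⟩
  | succ j ih =>
    intro i hi h1 h2
    by_cases hk : f j ≤ k
    · by_cases hij : i ≤ j
      · obtain ⟨t, ht, hft⟩ := ih i hij h1 hk
        exact ⟨t, by omega, hft⟩
      · obtain rfl : i = j + 1 := by omega
        exact ⟨j + 1, le_refl _, by omega⟩
    · have := h j
      exact ⟨j + 1, le_refl _, by omega⟩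

/-- The warping degree, as a function of the base point, changes by exactly `±1` at each step,
takes every value between its minimum and maximum, and a base point minimizing the warping
degree of the reversed diagram `−D` maximizes the warping degree of `D`. -/
theorem warpingDegree_step_and_intermediate (n : ℕ) (hn : 1 ≤ n)
    (o u : Fin n → Fin (2 * n))
    (hval : Function.Injective (Sum.elim o u : Fin n ⊕ Fin n → Fin (2 * n))) :
    (∀ a₁ a₂ : Fin (2 * n + 1), a₁.val + 1 = a₂.val →
      (warpingDegree n o u a₂ = warpingDegree n o u a₁ + 1 ∨
       warpingDegree n o u a₁ = warpingDegree n o u a₂ + 1)) ∧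
    (∀ k : ℕ, (∃ a, warpingDegree n o u a ≤ k) → (∃ a, k ≤ warpingDegree n o u a) →
      ∃ a, warpingDegree n o u a = k) ∧
    (∀ a' : Fin (2 * n + 1),
      (∀ b : Fin (2 * n + 1),
        warpingDegree n (fun c => revPos n (o c)) (fun c => revPos n (u c)) (revBase n a') ≤
          warpingDegree n (fun c => revPos n (o c)) (fun c => revPos n (u c)) b) →
      ∀ b : Fin (2 * n + 1), warpingDegree n o u b ≤ warpingDegree n o u a') := by
  refine ⟨fun a₁ a₂ h => step_lemma n hn o u hval a₁ a₂ h, ?_, ?_⟩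
  · intro k ⟨a, ha⟩ ⟨b, hb⟩
    set f : ℕ → ℕ := fun i => warpingDegree n o u ⟨min i (2 * n), by omega⟩ with hf
    have hstep : ∀ i, f (i + 1) = f i + 1 ∨ f i = f (i + 1) + 1 ∨ f (i + 1) = f i := by
      intro i
      by_cases hi : i < 2 * n
      · have h1 : (⟨min i (2 * n), by omega⟩ : Fin (2 * n + 1)) = ⟨i, by omega⟩ :=
          Fin.ext (by simp; omega)
        have h2 : (⟨min (i + 1) (2 * n), by omega⟩ : Fin (2 * n + 1)) = ⟨i + 1, by omega⟩ :=
          Fin.ext (by simp; omega)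
        have := step_lemma n hn o u hval ⟨i, by omega⟩ ⟨i + 1, by omega⟩ rfl
        simp only [hf, h1, h2]
        tauto
      · right; right
        have : min (i + 1) (2 * n) = min i (2 * n) := by omega
        simp only [hf, this]
    have hfa : f a.val = warpingDegree n o u a := by
      have : (⟨min a.val (2 * n), by omega⟩ : Fin (2 * n + 1)) = a :=
        Fin.ext (by have := a.isLt; simp; omega)
      simp only [hf, this]
    have hfb : f b.val = warpingDegree n o u b := by
      have : (⟨min b.val (2 * n), by omega⟩ : Fin (2 * n + 1)) = b :=
        Fin.ext (by have := b.isLt; simp; omega)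
      simp only [hf, this]
    by_cases hab : a.val ≤ b.val
    · obtain ⟨t, _, hft⟩ := ivt_up f (fun i => by rcases hstep i with h' | h' | h' <;> omega) k
        b.val a.val hab (by omega) (by omega)
      exact ⟨⟨min t (2 * n), by omega⟩, hft⟩
    · obtain ⟨t, _, hft⟩ := ivt_down f (fun i => by rcases hstep i with h' | h' | h' <;> omega) k
        a.val b.val (by omega) (by omega) (by omega)
      exact ⟨⟨min t (2 * n), by omega⟩, hft⟩
  · intro a' hmin b
    have h1 := complement_lemma n o u hval a'
    have h2 := complement_lemma n o u hval b
    have h3 := hmin (revBase n b)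
    omega
end

section
/- With the Gauss-sequence model: if a knotoid diagram D with n crossings is alternating (over- and under-passages strictly alternate along positions 0, …, 2n−1), then the set {d(D_a) : a ∈ Fin (2n+1)} has exactly two elements, namely {m, m+1} for m = d(D), provided n ≥ 1. -/
/-- For an alternating diagram with `n ≥ 1` crossings, the warping degree takes exactly the
two values `m` and `m + 1` as the base point varies, where `m = d(D)` is the minimum. -/
theorem warpingDegree_image_of_alternating (n : ℕ) (hn : 1 ≤ n)
    (o u : Fin n → Fin (2 * n))
    (hval : Function.Injective (Sum.elim o u : Fin n ⊕ Fin n → Fin (2 * n)))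
    (halt : IsAlternating n o u) :
    ∃ m : ℕ, (∀ b : Fin (2 * n + 1), m ≤ warpingDegree n o u b) ∧
      Finset.image (fun a => warpingDegree n o u a) Finset.univ = {m, m + 1} := by
  have hNpos : 0 < 2 * n := by omega
  have relLt : ∀ (b : Fin (2*n+1)) (p : Fin (2*n)), relLabel n b p < 2*n := by
    intro b p; exact Nat.mod_lt _ hNpos
  have relEq : ∀ (b : ℕ) (hb : b < 2*n+1) (p : Fin (2*n)),
      relLabel n ⟨b, hb⟩ p = if b ≤ p.val then p.val - b else p.val + 2*n - b := by
    intro b hb p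
    have hp := p.isLt
    show (p.val + 2*n - b) % (2*n) = _
    split_ifs with h
    · have e : p.val + 2*n - b = (p.val - b) + 2*n := by omega
      rw [e, Nat.add_mod_right, Nat.mod_eq_of_lt (by omega)]
    · exact Nat.mod_eq_of_lt (by omega)
  have oinj : Function.Injective o := fun x y h => by
    have h2 : (Sum.inl x : Fin n ⊕ Fin n) = Sum.inl y := hval (by simpa using h)
    exact Sum.inl.inj h2
  have uinj : Function.Injective u := fun x y h => by
    have h2 : (Sum.inr x : Fin n ⊕ Fin n) = Sum.inr y := hval (by simpa using h)
    exact Sum.inr.inj h2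
  have hcard : Fintype.card (Fin n ⊕ Fin n) = Fintype.card (Fin (2*n)) := by
    rw [Fintype.card_sum, Fintype.card_fin, Fintype.card_fin]; omega
  have hsurj : Function.Surjective (Sum.elim o u) :=
    ((Fintype.bijective_iff_injective_and_card (Sum.elim o u)).mpr ⟨hval, hcard⟩).surjective
  have hOU : ∀ p : Fin (2*n), (∃ c, o c = p) → ¬ ∃ c, u c = p := by
    rintro p ⟨c, hc⟩ ⟨c', hc'⟩
    have : (Sum.inl c : Fin n ⊕ Fin n) = Sum.inr c' := hval (by simp [hc, hc'])
    simp at this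
  have hU : ∀ p : Fin (2*n), (¬ ∃ c, o c = p) → ∃ c, u c = p := by
    intro p h
    obtain ⟨x, hx⟩ := hsurj p
    cases x with
    | inl c => exact absurd ⟨c, hx⟩ h
    | inr c => exact ⟨c, hx⟩
  have hO : ∀ p : Fin (2*n), (¬ ∃ c, u c = p) → ∃ c, o c = p := by
    intro p h
    obtain ⟨x, hx⟩ := hsurj p
    cases x with
    | inl c => exact ⟨c, hx⟩
    | inr c => exact absurd ⟨c, hx⟩ h
  -- moving the base point past an over-passage increases the warping degree by 1
  have stepO : ∀ (a : ℕ) (h1 : a + 1 < 2*n + 1) (h2 : a < 2*n + 1), a < 2*n →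
      (∃ c, (o c).val = a) →
      warpingDegree n o u ⟨a+1, h1⟩ = warpingDegree n o u ⟨a, h2⟩ + 1 := by
    rintro a h1 h2 ha ⟨c0, hc0⟩
    have hu0 : (u c0).val ≠ a := fun h =>
      hOU ⟨a, ha⟩ ⟨c0, Fin.ext hc0⟩ ⟨c0, Fin.ext h⟩
    have key : ∀ p : Fin (2*n), p.val ≠ a →
        relLabel n ⟨a+1, h1⟩ p + 1 = relLabel n ⟨a, h2⟩ p := by
      intro p hp
      have hpl := p.isLt
      rw [relEq (a+1) h1 p, relEq a h2 p]
      split_ifs <;> omega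
    unfold warpingDegree
    have hset : (Finset.univ.filter fun c =>
        relLabel n ⟨a+1, h1⟩ (u c) < relLabel n ⟨a+1, h1⟩ (o c)) =
        insert c0 (Finset.univ.filter fun c =>
        relLabel n ⟨a, h2⟩ (u c) < relLabel n ⟨a, h2⟩ (o c)) := by
      ext c
      simp only [Finset.mem_filter, Finset.mem_univ, true_and, Finset.mem_insert]
      by_cases hc : c = c0
      · subst hc
        have e1 : relLabel n ⟨a+1, h1⟩ (o c) = 2*n - 1 := by
          rw [relEq (a+1) h1 (o c)]; split_ifs <;> omega
        have e2 := key (u c) hu0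
        have e3 := relLt ⟨a, h2⟩ (u c)
        constructor
        · intro _; exact Or.inl rfl
        · intro _; omega
      · have ho : (o c).val ≠ a := fun h => hc (oinj (Fin.ext (by rw [h, hc0])))
        have hu : (u c).val ≠ a := fun h =>
          hOU ⟨a, ha⟩ ⟨c0, Fin.ext hc0⟩ ⟨c, Fin.ext h⟩
        have k1 := key (o c) ho
        have k2 := key (u c) hu
        constructor
        · intro h; exact Or.inr (by omega)
        · rintro (h | h)
          · exact absurd h hc
          · omega
    have hnotmem : c0 ∉ (Finset.univ.filter fun c =>
        relLabel n ⟨a, h2⟩ (u c) < relLabel n ⟨a, h2⟩ (o c)) := by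
      simp only [Finset.mem_filter, Finset.mem_univ, true_and, not_lt]
      have e : relLabel n ⟨a, h2⟩ (o c0) = 0 := by
        rw [relEq a h2 (o c0)]; split_ifs <;> omega
      omega
    rw [hset, Finset.card_insert_of_notMem hnotmem]
  -- moving the base point past an under-passage decreases the warping degree by 1
  have stepU : ∀ (a : ℕ) (h1 : a + 1 < 2*n + 1) (h2 : a < 2*n + 1), a < 2*n →
      (∃ c, (u c).val = a) →
      warpingDegree n o u ⟨a, h2⟩ = warpingDegree n o u ⟨a+1, h1⟩ + 1 := by
    rintro a h1 h2 ha ⟨c0, hc0⟩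
    have ho0 : (o c0).val ≠ a := fun h =>
      hOU ⟨a, ha⟩ ⟨c0, Fin.ext h⟩ ⟨c0, Fin.ext hc0⟩
    have key : ∀ p : Fin (2*n), p.val ≠ a →
        relLabel n ⟨a+1, h1⟩ p + 1 = relLabel n ⟨a, h2⟩ p := by
      intro p hp
      have hpl := p.isLt
      rw [relEq (a+1) h1 p, relEq a h2 p]
      split_ifs <;> omega
    unfold warpingDegree
    have hset : (Finset.univ.filter fun c =>
        relLabel n ⟨a, h2⟩ (u c) < relLabel n ⟨a, h2⟩ (o c)) =
        insert c0 (Finset.univ.filter fun c =>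
        relLabel n ⟨a+1, h1⟩ (u c) < relLabel n ⟨a+1, h1⟩ (o c)) := by
      ext c
      simp only [Finset.mem_filter, Finset.mem_univ, true_and, Finset.mem_insert]
      by_cases hc : c = c0
      · subst hc
        have e1 : relLabel n ⟨a, h2⟩ (u c) = 0 := by
          rw [relEq a h2 (u c)]; split_ifs <;> omega
        have e2 := key (o c) ho0
        constructor
        · intro _; exact Or.inl rfl
        · intro _; omega
      · have hu : (u c).val ≠ a := fun h => hc (uinj (Fin.ext (by rw [h, hc0])))
        have ho : (o c).val ≠ a := fun h =>
          hOU ⟨a, ha⟩ ⟨c, Fin.ext h⟩ ⟨c0, Fin.ext hc0⟩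
        have k1 := key (o c) ho
        have k2 := key (u c) hu
        constructor
        · intro h; exact Or.inr (by omega)
        · rintro (h | h)
          · exact absurd h hc
          · omega
    have hnotmem : c0 ∉ (Finset.univ.filter fun c =>
        relLabel n ⟨a+1, h1⟩ (u c) < relLabel n ⟨a+1, h1⟩ (o c)) := by
      simp only [Finset.mem_filter, Finset.mem_univ, true_and, not_lt]
      have e1 : relLabel n ⟨a+1, h1⟩ (u c0) = 2*n - 1 := by
        rw [relEq (a+1) h1 (u c0)]; split_ifs <;> omega
      have e2 := key (o c0) ho0
      have e3 := relLt ⟨a, h2⟩ (o c0)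
      omega
    rw [hset, Finset.card_insert_of_notMem hnotmem]
  -- alternation in terms of values
  have haltN : ∀ k : ℕ, k + 1 < 2*n →
      ((∃ c, (o c).val = k + 1) ↔ ¬ ∃ c, (o c).val = k) := by
    intro k hk
    have h1 := halt ⟨k, by omega⟩ ⟨k+1, hk⟩ rfl
    constructor
    · rintro ⟨c, hc⟩ ⟨c', hc'⟩
      exact hOU ⟨k+1, hk⟩ ⟨c, Fin.ext hc⟩ (h1.mp ⟨c', Fin.ext hc'⟩)
    · intro h
      have hnu : ¬ ∃ c, u c = (⟨k+1, hk⟩ : Fin (2*n)) := fun hu => by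
        obtain ⟨c', hc'⟩ := h1.mpr hu
        exact h ⟨c', congrArg Fin.val hc'⟩
      obtain ⟨c, hc⟩ := hO ⟨k+1, hk⟩ hnu
      exact ⟨c, congrArg Fin.val hc⟩
  -- main parity argument, abstracted over the parity offset t
  have main : ∀ t m : ℕ, t ≤ 1 →
      (∀ k : ℕ, k < 2*n → ((∃ c, (o c).val = k) ↔ (k + t) % 2 = 0)) →
      (∀ h0 : (0:ℕ) < 2*n+1, warpingDegree n o u ⟨0, h0⟩ = m + t % 2) →
      ∃ m' : ℕ, (∀ b : Fin (2 * n + 1), m' ≤ warpingDegree n o u b) ∧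
        Finset.image (fun a => warpingDegree n o u a) Finset.univ = {m', m' + 1} := by
    intro t m ht hpar hbase
    have Hwd : ∀ (k : ℕ) (hk : k < 2*n+1),
        warpingDegree n o u ⟨k, hk⟩ = m + (k + t) % 2 := by
      intro k
      induction k with
      | zero =>
        intro hk
        have := hbase hk
        omega
      | succ k ih =>
        intro hk
        have hk2 : k < 2*n+1 := by omega
        have hkn : k < 2*n := by omega
        have e := ih hk2
        by_cases hko : ∃ c, (o c).val = k
        · have h1 := stepO k hk hk2 hkn hko
          have h2 := (hpar k hkn).mp hko
          omega
        · have hku : ∃ c, (u c).val = k := by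
            obtain ⟨c, hc⟩ := hU ⟨k, hkn⟩ (fun ⟨c, hc⟩ => hko ⟨c, congrArg Fin.val hc⟩)
            exact ⟨c, congrArg Fin.val hc⟩
          have h1 := stepU k hk hk2 hkn hku
          have h2 : (k + t) % 2 ≠ 0 := fun hh => hko ((hpar k hkn).mpr hh)
          omega
    refine ⟨m, ?_, ?_⟩
    · intro b
      have h := Hwd b.val b.isLt
      simp only [Fin.eta] at h
      omega
    · ext x
      simp only [Finset.mem_image, Finset.mem_univ, true_and, Finset.mem_insert,
        Finset.mem_singleton]
      constructor
      · rintro ⟨b, rfl⟩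
        have h := Hwd b.val b.isLt
        simp only [Fin.eta] at h
        omega
      · intro hx
        rcases hx with rfl | rfl
        · have hlt : t < 2*n+1 := by omega
          refine ⟨⟨t, hlt⟩, ?_⟩
          have h := Hwd t hlt
          omega
        · have hlt : 1 - t < 2*n+1 := by omega
          refine ⟨⟨1 - t, hlt⟩, ?_⟩
          have h := Hwd (1 - t) hlt
          omega
  by_cases h0 : ∃ c, (o c).val = 0
  · -- position 0 is an over-passage: t = 0
    have hpar : ∀ k : ℕ, k < 2*n → ((∃ c, (o c).val = k) ↔ (k + 0) % 2 = 0) := by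
      intro k
      induction k with
      | zero => exact fun _ => iff_of_true h0 (by norm_num)
      | succ k ih =>
        intro hk
        rw [haltN k hk, ih (by omega)]
        omega
    exact main 0 (warpingDegree n o u ⟨0, by omega⟩) (by omega) hpar (fun h0' => rfl)
  · -- position 0 is an under-passage: t = 1
    have hpar : ∀ k : ℕ, k < 2*n → ((∃ c, (o c).val = k) ↔ (k + 1) % 2 = 0) := by
      intro k
      induction k with
      | zero => exact fun _ => iff_of_false h0 (by norm_num)
      | succ k ih =>
        intro hk
        rw [haltN k hk, ih (by omega)]
        omega
    have hu0 : ∃ c, (u c).val = 0 := by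
      obtain ⟨c, hc⟩ := hU ⟨0, by omega⟩ (fun ⟨c, hc⟩ => h0 ⟨c, congrArg Fin.val hc⟩)
      exact ⟨c, congrArg Fin.val hc⟩
    have h11 : (0:ℕ) + 1 < 2*n+1 := by omega
    have h01 : (0:ℕ) < 2*n+1 := by omega
    have hstep0 := stepU 0 h11 h01 (by omega) hu0
    exact main 1 (warpingDegree n o u ⟨0+1, h11⟩) (by omega) hpar (fun _ => hstep0)
end
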